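/- arXiv:2104.08362 — 3 statements merged into one kernel-verified Lean document; each statement's English description precedes it below -/
import Mathlib

section
/- Let A be a finite-dimensional algebra over a field k with a complete set of orthogonal idempotents e_1,…,e_n, n ≥ 2, such that A = span_k{e_1,…,e_n} ⊕ A⁺ where A⁺ is a two-sided ideal contained in [A,A]. If A⁺ ≠ 0, then A admits no symmetric Frobenius form. -/
/-- Let `A` be a finite-dimensional algebra over a field `k` with a complete set of
orthogonal idempotents `e_1,…,e_n`, `n ≥ 2`, such that `A = span{e_i} ⊕ A⁺` where `A⁺`
is a two-sided ideal contained in `[A,A]`.  If `A⁺ ≠ 0`, then `A` admits no symmetric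
Frobenius form. -/
theorem no_symmetric_frobenius_form
    (k : Type*) [Field k] (A : Type*) [Ring A] [Algebra k A] [FiniteDimensional k A]
    (n : ℕ) (hn : 2 ≤ n) (e : Fin n → A)
    (horth : ∀ i j, e i * e j = if i = j then e i else 0)
    (hsum : ∑ i, e i = 1)
    (Aplus : Submodule k A)
    (hleft : ∀ a : A, ∀ x ∈ Aplus, a * x ∈ Aplus)
    (hright : ∀ a : A, ∀ x ∈ Aplus, x * a ∈ Aplus)
    (hcompl : IsCompl (Submodule.span k (Set.range e)) Aplus)
    (hsub : ∀ x ∈ Aplus, x ∈ Submodule.span k {z : A | ∃ a b : A, z = a*b - b*a})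
    (hne : Aplus ≠ ⊥) :
    ¬ ∃ lam : A →ₗ[k] k,
        (∀ a b : A, lam (a * b) = lam (b * a)) ∧
        (∀ a : A, a ≠ 0 → ∃ b : A, lam (a * b) ≠ 0) := by
  rintro ⟨lam, hsym, hfrob⟩
  -- lam vanishes on the span of commutators
  have hcomm : ∀ z ∈ Submodule.span k {z : A | ∃ a b : A, z = a*b - b*a}, lam z = 0 := by
    intro z hz
    induction hz using Submodule.span_induction with
    | mem z hz =>
      obtain ⟨a, b, rfl⟩ := hz
      simp [map_sub, hsym a b]
    | zero => simp
    | add x y _ _ hx hy => simp [hx, hy]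
    | smul c x _ hx => simp [hx]
  -- hence lam vanishes on Aplus
  have hAplus : ∀ x ∈ Aplus, lam x = 0 := fun x hx => hcomm x (hsub x hx)
  -- pick a nonzero element of Aplus
  obtain ⟨x, hxA, hx0⟩ : ∃ x ∈ Aplus, x ≠ 0 := by
    by_contra h
    push_neg at h
    exact hne (by ext y; simp only [Submodule.mem_bot]; exact ⟨fun hy => h y hy, fun hy => hy ▸ Aplus.zero_mem⟩)
  obtain ⟨b, hb⟩ := hfrob x hx0
  exact hb (hAplus _ (hright b x hxA))
end

section
/- Let k be a field with char(k) ≠ 2 and A = k⟨α,β,γ⟩/(α², β², γ^m) for m ≥ 2. In k⟨α,β⟩/(α²,β²), the alternating words (αβ)^i for i ≥ 1 satisfy: if γ = -α-β+αβ then γ^i ≡ ± (αβ)^i plus a k-linear combination of shorter alternating words, modulo commutators. Consequently, if γ^i = 0 for all i ≥ 1 then (αβ)^i ≡ 0 mod commutators for all i ≥ 1 (by induction on i). -/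
/-- The relations `α² = 0` and `β² = 0` in `k⟨α,β⟩`. -/
inductive FreeRel14 (k : Type*) [Field k] :
    FreeAlgebra k (Fin 2) → FreeAlgebra k (Fin 2) → Prop
  | asq : FreeRel14 k (FreeAlgebra.ι k 0 ^ 2) 0
  | bsq : FreeRel14 k (FreeAlgebra.ι k 1 ^ 2) 0

/-- Alternating list `[0,1,0,1,...]` of length `2*i`. -/
def altL14 : ℕ → List (Fin 2)
  | 0 => []
  | i+1 => 0 :: 1 :: altL14 i

theorem altL14_length (i : ℕ) : (altL14 i).length = 2 * i := by
  induction i with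
  | zero => rfl
  | succ n ih => simp [altL14, ih]; omega

/-- In `B = k⟨α,β⟩/(α², β²)` over a field of characteristic `≠ 2`, setting
`γ := -α-β+αβ`, for every `i ≥ 1` one has `γ^i ≡ c_i·(αβ)^i` plus a `k`-linear
combination of shorter words (of positive length `< 2i` in the letters `α`, `β`), modulo
commutators, with `c_i ∈ {±1, ±2}` a unit.  Consequently, if `γ^i = 0` for all `i ≥ 1`,
then `(αβ)^i ≡ 0` mod commutators for all `i ≥ 1`. -/
theorem gamma_powers_alternating_words (k : Type*) [Field k] (hchar : ringChar k ≠ 2) :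
    ∀ (α β γ : RingQuot (FreeRel14 k)),
      α = RingQuot.mkAlgHom k (FreeRel14 k) (FreeAlgebra.ι k 0) →
      β = RingQuot.mkAlgHom k (FreeRel14 k) (FreeAlgebra.ι k 1) →
      γ = -α - β + α*β →
      (∀ i : ℕ, 1 ≤ i → ∃ c : k, (c = 1 ∨ c = -1 ∨ c = 2 ∨ c = -2) ∧
        γ^i - c • (α*β)^i ∈
          Submodule.span k {z : RingQuot (FreeRel14 k) | ∃ a b, z = a*b - b*a} ⊔
          Submodule.span k {z : RingQuot (FreeRel14 k) |
            ∃ l : List (Fin 2), 1 ≤ l.length ∧ l.length < 2*i ∧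
              z = (l.map ![α, β]).prod}) ∧
      ((∀ i : ℕ, 1 ≤ i → γ^i = 0) →
        ∀ i : ℕ, 1 ≤ i →
          (α*β)^i ∈ Submodule.span k {z : RingQuot (FreeRel14 k) | ∃ a b, z = a*b - b*a}) := by
  intro α β γ hα hβ hγ
  have hf0 : (![α, β] : Fin 2 → RingQuot (FreeRel14 k)) 0 = α := rfl
  have hf1 : (![α, β] : Fin 2 → RingQuot (FreeRel14 k)) 1 = β := rfl
  set f : Fin 2 → RingQuot (FreeRel14 k) := ![α, β] with hf
  set S : ℕ → Submodule k (RingQuot (FreeRel14 k)) := fun i =>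
    Submodule.span k {z : RingQuot (FreeRel14 k) | ∃ l : List (Fin 2),
      1 ≤ l.length ∧ l.length < 2*i ∧ z = (l.map f).prod} with hS
  have hgen : ∀ (i : ℕ) (l : List (Fin 2)), 1 ≤ l.length → l.length < 2*i →
      (l.map f).prod ∈ S i := by
    intro i l h1 h2
    exact Submodule.subset_span ⟨l, h1, h2, rfl⟩
  -- (αβ)^i is the product of the alternating word of length 2i
  have halt : ∀ i : ℕ, ((altL14 i).map f).prod = (α*β)^i := by
    intro i
    induction i with
    | zero => simp [altL14]
    | succ n ih =>
      rw [altL14, pow_succ']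
      simp only [List.map_cons, List.prod_cons, hf0, hf1, ih, mul_assoc]
  -- multiplication by γ maps S i into S (i+1)
  have hmulγ : ∀ (i : ℕ) (x : RingQuot (FreeRel14 k)), x ∈ S i → γ * x ∈ S (i+1) := by
    intro i x hx
    induction hx using Submodule.span_induction with
    | mem z hz =>
      obtain ⟨l, h1, h2, rfl⟩ := hz
      have e : γ * (l.map f).prod =
          α * (β * (l.map f).prod) - α * (l.map f).prod - β * (l.map f).prod := by
        rw [hγ]; noncomm_ring
        try simp only [smul_mul_assoc, mul_smul_comm]
        try abel
      rw [e]
      refine sub_mem (sub_mem ?_ ?_) ?_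
      · have e2 : α * (β * (l.map f).prod) = ((0 :: 1 :: l).map f).prod := by
          simp [List.prod_cons, hf0, hf1]
        rw [e2]
        exact hgen _ _ (by simp) (by simp; omega)
      · have e2 : α * (l.map f).prod = ((0 :: l).map f).prod := by
          simp [List.prod_cons, hf0]
        rw [e2]
        exact hgen _ _ (by simp) (by simp; omega)
      · have e2 : β * (l.map f).prod = ((1 :: l).map f).prod := by
          simp [List.prod_cons, hf1]
        rw [e2]
        exact hgen _ _ (by simp) (by simp; omega)
    | zero => simpa using (zero_mem (S (i+1)))
    | add x y hx hy ihx ihy =>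
      rw [mul_add]; exact add_mem ihx ihy
    | smul c x hx ih =>
      rw [mul_smul_comm]; exact Submodule.smul_mem _ _ ih
  -- main induction
  have key : ∀ i : ℕ, 1 ≤ i → γ^i - (α*β)^i ∈ S i := by
    intro i hi
    induction i, hi using Nat.le_induction with
    | base =>
      have e : γ^1 - (α*β)^1 = - ([(0:Fin 2)].map f).prod - ([(1:Fin 2)].map f).prod := by
        simp only [List.map_cons, List.map_nil, List.prod_cons, List.prod_nil,
          hf0, hf1, mul_one]
        rw [hγ]; noncomm_ring
      rw [e]
      exact sub_mem (neg_mem (hgen 1 [0] (by simp) (by simp)))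
        (hgen 1 [1] (by simp) (by simp))
    | succ n hn ih =>
      have e3 : γ - α*β = -α - β := by rw [hγ]; abel
      have e : γ^(n+1) - (α*β)^(n+1) =
          γ * (γ^n - (α*β)^n) + ((γ - α*β) * (α*β)^n) := by
        rw [pow_succ' γ, pow_succ' (α*β), mul_sub, sub_mul]; abel
      have e4 : (γ - α*β) * (α*β)^n = -(α * (α*β)^n) - β * (α*β)^n := by
        rw [e3]; noncomm_ring
        try simp only [smul_mul_assoc, mul_smul_comm]
        try abel
      rw [e, e4]
      refine add_mem (hmulγ n _ ih) (sub_mem (neg_mem ?_) ?_)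
      · have e2 : α * (α*β)^n = ((0 :: altL14 n).map f).prod := by
          simp [List.prod_cons, hf0, halt]
        rw [e2]
        exact hgen _ _ (by simp) (by simp [altL14_length]; omega)
      · have e2 : β * (α*β)^n = ((1 :: altL14 n).map f).prod := by
          simp [List.prod_cons, hf1, halt]
        rw [e2]
        exact hgen _ _ (by simp) (by simp [altL14_length]; omega)
  constructor
  · intro i hi
    refine ⟨1, Or.inl rfl, ?_⟩
    rw [one_smul]
    exact Submodule.mem_sup_right (key i hi)
  · intro h0 i hi
    -- from γ = 0 and α² = 0 we get αβ = 0
    have hγ0 : γ = 0 := by simpa using h0 1 le_rfl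
    have hα2 : α * α = 0 := by
      rw [hα, ← map_mul, ← sq]
      rw [RingQuot.mkAlgHom_rel k FreeRel14.asq]
      simp
    have hab : α * β = 0 := by
      have : α * γ = 0 := by rw [hγ0, mul_zero]
      rw [hγ] at this
      have e : α * (-α - β + α*β) = -(α*β) + (α*α)*β - (α*α) := by
        noncomm_ring
        try simp only [smul_mul_assoc, mul_smul_comm]
        try abel
      rw [e, hα2] at this
      simpa using this
    rw [hab, zero_pow (by omega : i ≠ 0)]
    exact zero_mem _
end

section
/- Let R be a commutative ring, Q a quiver, and J, J' two-sided ideals of the path algebra RQ̄ of the doubled quiver such that J and J' are both contained in the span of paths of length ≥ 2 and agree modulo paths of length ≥ 3 (i.e. generated by elements r and r' with r - r' a combination of paths of length ≥ 3). If φ: RQ̄/J → RQ̄/J' is an algebra map sending each vertex idempotent to itself and each arrow a to c_a·a plus paths of length ≥ 2, and φ is well-defined, then for the additive preprojective relation r_add = Σ_a (aa* − a*a): the degree-2 part of φ(r_add) is Σ_a c_a c_{a*}(aa* − a*a); hence surjectivity of φ forces all c_a c_{a*} with a incident to a fixed vertex to be equal. -/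
/-- The defining relations of the path algebra of a quiver with vertex set `V`, arrow
set `E`, and source/target maps `s, t : E → V`, presented as a quotient of the free
algebra on `V ⊕ E`. -/
inductive PathRel (k : Type*) [Field k] (V E : Type*) [Fintype V] [DecidableEq V]
    (s t : E → V) : FreeAlgebra k (V ⊕ E) → FreeAlgebra k (V ⊕ E) → Prop
  | vertex (i j : V) : PathRel k V E s t
      (FreeAlgebra.ι k (Sum.inl i) * FreeAlgebra.ι k (Sum.inl j))
      (if i = j then FreeAlgebra.ι k (Sum.inl i) else 0)
  | total : PathRel k V E s t (∑ i : V, FreeAlgebra.ι k (Sum.inl i)) 1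
  | source (e : E) : PathRel k V E s t
      (FreeAlgebra.ι k (Sum.inl (s e)) * FreeAlgebra.ι k (Sum.inr e))
      (FreeAlgebra.ι k (Sum.inr e))
  | target (e : E) : PathRel k V E s t
      (FreeAlgebra.ι k (Sum.inr e) * FreeAlgebra.ι k (Sum.inl (t e)))
      (FreeAlgebra.ι k (Sum.inr e))

section

variable (k : Type*) [Field k] (V E0 : Type*) [Fintype V] [DecidableEq V] [Fintype E0]
  (src tgt : E0 → V)

/-- The path algebra of the doubled quiver `Q̄` (arrows `E0 ⊕ E0`, where `inr a` is the
reverse `a*` of the arrow `inl a`). -/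
abbrev PathAlg : Type _ :=
  RingQuot (PathRel k V (E0 ⊕ E0) (Sum.elim src tgt) (Sum.elim tgt src))

/-- The image of an arrow of `Q̄` in the path algebra. -/
noncomputable def arrow (a : E0 ⊕ E0) : PathAlg k V E0 src tgt :=
  RingQuot.mkAlgHom k _ (FreeAlgebra.ι k (Sum.inr a))

/-- The vertex idempotent of the path algebra at `i ∈ V`. -/
noncomputable def vertex (i : V) : PathAlg k V E0 src tgt :=
  RingQuot.mkAlgHom k _ (FreeAlgebra.ι k (Sum.inl i))

/-- The span of (images of) paths of length at least `m` in the path algebra. -/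
noncomputable def lenGe (m : ℕ) : Submodule k (PathAlg k V E0 src tgt) :=
  Submodule.span k {z | ∃ l : List (E0 ⊕ E0), m ≤ l.length ∧
    z = (l.map (arrow k V E0 src tgt)).prod}

/-- The additive preprojective relation `r_add = ∑_a (a a* - a* a)`. -/
noncomputable def radd : PathAlg k V E0 src tgt :=
  ∑ a : E0, (arrow k V E0 src tgt (Sum.inl a) * arrow k V E0 src tgt (Sum.inr a) -
    arrow k V E0 src tgt (Sum.inr a) * arrow k V E0 src tgt (Sum.inl a))

end

/-!
Degree by degree: writing `φ(a) = c_a a + (paths of length ≥ 2)` and expanding the products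
`φ(a) φ(a*)`, every term except `c_a c_{a*} a a*` has length at least three, which gives the
degree-2 part of `φ(r_add)`.

For the second claim, `φ(r_add)` is itself of length `≥ 3` modulo `J'`, because `r_add ≡ r = 0`
in `P/J` up to length `≥ 3` terms and `φ` does not lower length. So
`x = ∑_a c_a c_{a*} (a a* - a* a)` lies in `J' + (paths of length ≥ 3)`. To read off its
coefficients at arrows `a, b` incident to `v`, let `α ∈ {a, a*}` and `β ∈ {b, b*}` leave `v`,
and let `P` act on the 4-dimensional "diamond" module with basis `m₀, m₁, m₂, m₃` in which
`α, β` send `m₀` to `m₁, m₂` and their reverses send `m₁, m₂` to `±m₃`. Paths of length `≥ 3` act by zero, and the signs can be chosen so that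
`r_add` acts by zero, hence so does all of `J'`; but `x` sends `m₀` to
`(c_a c_{a*} - c_b c_{b*}) m₃`.
-/

namespace Matrix

variable {R : Type*} [CommRing R]

def diamond (a b c d : R) : Matrix (Fin 4) (Fin 4) R :=
  !![0, a, b, 0; 0, 0, 0, c; 0, 0, 0, d; 0, 0, 0, 0]

theorem diamond_mul_diamond (a b c d a' b' c' d' : R) :
    diamond a b c d * diamond a' b' c' d' = single 0 3 (a * c' + b * d') := by
  ext i j; fin_cases i <;> fin_cases j <;> simp [diamond, mul_apply, Fin.sum_univ_four]

theorem single_mul_diamond (z a b c d : R) : single 0 3 z * diamond a b c d = 0 := by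
  ext i j; fin_cases i <;> fin_cases j <;> simp [diamond, mul_apply, Fin.sum_univ_four]

theorem diagonal_mul_diamond (w : Fin 4 → R) (a b c d : R) :
    diagonal w * diamond a b c d = diamond (w 0 * a) (w 0 * b) (w 1 * c) (w 2 * d) := by
  ext i j; fin_cases i <;> fin_cases j <;> simp [diamond]

theorem diamond_mul_diagonal (w : Fin 4 → R) (a b c d : R) :
    diamond a b c d * diagonal w = diamond (a * w 1) (b * w 2) (c * w 3) (d * w 3) := by
  ext i j; fin_cases i <;> fin_cases j <;> simp [diamond]

end Matrix

theorem Sum.elim_swap_apply {α β γ : Type*} (f : β → γ) (g : α → γ) (x : α ⊕ β) :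
    Sum.elim f g x.swap = Sum.elim g f x := by
  cases x <;> rfl

theorem LinearMap.exists_sub_smul_mem_of_sub_smul_mem_map {R M N : Type*} [CommRing R]
    [AddCommGroup M] [Module R M] [AddCommGroup N] [Module R N] (f : M →ₗ[R] N)
    {p : Submodule R M} {y : N} {c : R} {z : M} (h : y - c • f z ∈ p.map f) :
    ∃ u, u - c • z ∈ p ∧ y = f u := by
  obtain ⟨w, hw, hfw⟩ := h
  refine ⟨c • z + w, by simpa using hw, ?_⟩
  rw [map_add, map_smul, hfw, add_sub_cancel]

theorem AlgHom.map_eq_zero_of_mem_span_mul_mul {R A B : Type*} [CommSemiring R] [Semiring A]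
    [Semiring B] [Algebra R A] [Algebra R B] (f : A →ₐ[R] B) {r : A} (hr : f r = 0) {x : A}
    (hx : x ∈ Submodule.span R {z | ∃ p q, z = p * r * q}) : f x = 0 := by
  refine (Submodule.span_le (p := LinearMap.ker f.toLinearMap)).mpr ?_ hx
  rintro _ ⟨p, q, rfl⟩
  simp [hr]

theorem mul_sub_smul_mul_mem {R A : Type*} [CommRing R] [Ring A] [Algebra R A]
    {F : ℕ → Submodule R A} [SetLike.GradedMonoid F] (hF : Antitone F) {x y x₀ y₀ : A} {c d : R}
    (hx₀ : x₀ ∈ F 1) (hy₀ : y₀ ∈ F 1) (hx : x - c • x₀ ∈ F 2) (hy : y - d • y₀ ∈ F 2) :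
    x * y - (c * d) • (x₀ * y₀) ∈ F 3 := by
  have expand : x * y - (c * d) • (x₀ * y₀) =
      c • (x₀ * (y - d • y₀)) + d • ((x - c • x₀) * y₀) + (x - c • x₀) * (y - d • y₀) := by
    simp only [mul_sub, sub_mul, smul_mul_assoc, mul_smul_comm, smul_sub, smul_smul, mul_comm d c]
    abel
  rw [expand]
  refine add_mem (add_mem (Submodule.smul_mem _ _ ?_) (Submodule.smul_mem _ _ ?_)) ?_
  · exact SetLike.mul_mem_graded hx₀ hy
  · exact SetLike.mul_mem_graded hx hy₀
  · exact hF (by norm_num) (SetLike.mul_mem_graded hx hy)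

section Filtration

variable {k : Type*} [Field k] {V E0 : Type*} [Fintype V] [DecidableEq V] {src tgt : E0 → V}

theorem lenGe_antitone : Antitone (lenGe k V E0 src tgt) := fun _ _ hmn =>
  Submodule.span_mono fun _ ⟨l, hl, hz⟩ => ⟨l, hmn.trans hl, hz⟩

theorem arrow_mem_lenGe_one (δ : E0 ⊕ E0) :
    arrow k V E0 src tgt δ ∈ lenGe k V E0 src tgt 1 :=
  Submodule.subset_span ⟨[δ], le_rfl, by simp⟩

instance : SetLike.GradedMonoid (lenGe k V E0 src tgt) where
  one_mem := Submodule.subset_span ⟨[], le_rfl, rfl⟩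
  mul_mem m n x y hx hy := by
    refine Submodule.mul_le.mp ?_ x hx y hy
    rw [lenGe, lenGe, Submodule.span_mul_span]
    refine Submodule.span_mono ?_
    rintro _ ⟨_, ⟨l₁, hl₁, rfl⟩, _, ⟨l₂, hl₂, rfl⟩, rfl⟩
    exact ⟨l₁ ++ l₂, by simp; omega, by simp⟩

theorem map_lenGe_le_map_lenGe {B : Type*} [Ring B] [Algebra k B]
    (ψ π : PathAlg k V E0 src tgt →ₐ[k] B) (u : E0 ⊕ E0 → PathAlg k V E0 src tgt)
    (hu : ∀ δ, u δ ∈ lenGe k V E0 src tgt 1) (hψ : ∀ δ, ψ (arrow k V E0 src tgt δ) = π (u δ))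
    (n : ℕ) :
    (lenGe k V E0 src tgt n).map ψ.toLinearMap ≤ (lenGe k V E0 src tgt n).map π.toLinearMap := by
  rw [Submodule.map_le_iff_le_comap, lenGe, Submodule.span_le]
  rintro _ ⟨l, hl, rfl⟩
  refine ⟨(l.map u).prod, lenGe_antitone hl ?_, ?_⟩
  · simpa using SetLike.list_prod_map_mem_graded l (fun _ => 1) u fun δ _ => hu δ
  · simp [map_list_prod, Function.comp_def, hψ]

theorem sum_commutator_sub_mem_lenGe_three [Fintype E0] (c : E0 ⊕ E0 → k)
    (u : E0 ⊕ E0 → PathAlg k V E0 src tgt)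
    (hu : ∀ δ, u δ - c δ • arrow k V E0 src tgt δ ∈ lenGe k V E0 src tgt 2) :
    ∑ a, (u (.inl a) * u (.inr a) - u (.inr a) * u (.inl a)) -
      ∑ a, (c (.inl a) * c (.inr a)) •
        (arrow k V E0 src tgt (.inl a) * arrow k V E0 src tgt (.inr a) -
          arrow k V E0 src tgt (.inr a) * arrow k V E0 src tgt (.inl a)) ∈
      lenGe k V E0 src tgt 3 := by
  have hquad (δ δ' : E0 ⊕ E0) :=
    mul_sub_smul_mul_mem lenGe_antitone (arrow_mem_lenGe_one δ) (arrow_mem_lenGe_one δ')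
      (hu δ) (hu δ')
  rw [← Finset.sum_sub_distrib]
  refine Submodule.sum_mem _ fun a _ => ?_
  convert sub_mem (hquad (.inl a) (.inr a)) (hquad (.inr a) (.inl a)) using 1
  rw [smul_sub, mul_comm (c (.inr a))]
  abel

end Filtration

section DiamondRep

open Matrix

variable {k : Type*} [Field k] {V E0 : Type*} [Fintype V] [DecidableEq V] [DecidableEq E0]

/-- Matrices act on row vectors: `α : m₀ ↦ m₁`, `β : m₀ ↦ m₂`, `α.swap : m₁ ↦ x m₃`,
`β.swap : m₂ ↦ y m₃`, and `m₀, m₁, m₂, m₃` sit at the vertices `s α, t α, t β, s α`. -/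
noncomputable def diamondRepGen (src tgt : E0 → V) (α β : E0 ⊕ E0) (x y : k) :
    V ⊕ (E0 ⊕ E0) → Matrix (Fin 4) (Fin 4) k :=
  Sum.elim
    (fun i => diagonal fun j =>
      if ![Sum.elim src tgt α, Sum.elim tgt src α, Sum.elim tgt src β, Sum.elim src tgt α] j = i
      then 1 else 0)
    (fun δ => diamond (if δ = α then 1 else 0) (if δ = β then 1 else 0)
      (if δ = α.swap then x else 0) (if δ = β.swap then y else 0))

theorem diamondRepGen_pathRel {src tgt : E0 → V} {α β : E0 ⊕ E0}
    (hαβ : Sum.elim src tgt α = Sum.elim src tgt β) (x y : k)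
    ⦃u v : FreeAlgebra k (V ⊕ (E0 ⊕ E0))⦄
    (h : PathRel k V (E0 ⊕ E0) (Sum.elim src tgt) (Sum.elim tgt src) u v) :
    FreeAlgebra.lift k (diamondRepGen src tgt α β x y) u =
      FreeAlgebra.lift k (diamondRepGen src tgt α β x y) v := by
  cases h with
  | vertex i j =>
    simp only [map_mul, FreeAlgebra.lift_ι_apply, diamondRepGen, Sum.elim_inl,
      diagonal_mul_diagonal]
    split_ifs with hij
    · subst hij; simp
    · ext a b; simp [diagonal_apply]; grind
  | total =>
    ext a b
    simp [diamondRepGen, Matrix.sum_apply, diagonal_apply, one_apply]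
  | source e =>
    simp only [map_mul, FreeAlgebra.lift_ι_apply, diamondRepGen, Sum.elim_inl, Sum.elim_inr,
      diagonal_mul_diamond]
    congr 1 <;> split_ifs <;> simp_all [Sum.elim_swap_apply]
  | target e =>
    simp only [map_mul, FreeAlgebra.lift_ι_apply, diamondRepGen, Sum.elim_inl, Sum.elim_inr,
      diamond_mul_diagonal]
    congr 1 <;> split_ifs <;> simp_all [Sum.elim_swap_apply]

noncomputable def diamondRep (src tgt : E0 → V) {α β : E0 ⊕ E0}
    (hαβ : Sum.elim src tgt α = Sum.elim src tgt β) (x y : k) :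
    PathAlg k V E0 src tgt →ₐ[k] Matrix (Fin 4) (Fin 4) k :=
  RingQuot.liftAlgHom k
    ⟨FreeAlgebra.lift k (diamondRepGen src tgt α β x y), diamondRepGen_pathRel hαβ x y⟩

variable {src tgt : E0 → V} {α β : E0 ⊕ E0} (hαβ : Sum.elim src tgt α = Sum.elim src tgt β)
  (x y : k)

theorem diamondRep_arrow (δ : E0 ⊕ E0) :
    diamondRep src tgt hαβ x y (arrow k V E0 src tgt δ) =
      diamond (if δ = α then 1 else 0) (if δ = β then 1 else 0)
        (if δ = α.swap then x else 0) (if δ = β.swap then y else 0) := by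
  simp [diamondRep, arrow, diamondRepGen]

theorem diamondRep_eq_zero_of_mem_lenGe_three {z : PathAlg k V E0 src tgt}
    (hz : z ∈ lenGe k V E0 src tgt 3) : diamondRep src tgt hαβ x y z = 0 := by
  refine Submodule.span_induction ?_ (map_zero _)
    (fun _ _ _ _ h h' => by rw [map_add, h, h', add_zero])
    (fun c _ _ h => by rw [map_smul, h, smul_zero]) hz
  rintro _ ⟨_ | ⟨δ₁, _ | ⟨δ₂, _ | ⟨δ₃, l⟩⟩⟩, hl, rfl⟩
  iterate 3 simp at hl
  simp only [List.map_cons, List.prod_cons, map_mul, diamondRep_arrow, ← mul_assoc,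
    diamond_mul_diamond, single_mul_diamond, zero_mul]

theorem diamondRep_sum_smul_commutator [Fintype E0] (g : E0 → k) :
    diamondRep src tgt hαβ x y (∑ a, g a •
      (arrow k V E0 src tgt (.inl a) * arrow k V E0 src tgt (.inr a) -
        arrow k V E0 src tgt (.inr a) * arrow k V E0 src tgt (.inl a))) =
      single 0 3 (Sum.elim g (-g) α * x + Sum.elim g (-g) β * y) := by
  have hsingle : ∀ z : k, single (0 : Fin 4) (3 : Fin 4) z = singleLinearMap k 0 3 z :=
    fun _ => rfl
  simp only [map_sum, map_smul, map_sub, map_mul, diamondRep_arrow, diamond_mul_diamond, hsingle]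
  simp only [← map_sub, ← map_smul, ← map_sum]
  congr 1
  cases α <;> cases β <;>
    simp [Finset.sum_add_distrib, Finset.sum_sub_distrib, mul_add, mul_sub] <;> ring

end DiamondRep

theorem exists_doubled_arrow_of_incident {k V E0 : Type*} [Ring k] {src tgt : E0 → V} {v : V} {a : E0}
    (ha : src a = v ∨ tgt a = v) :
    ∃ α : E0 ⊕ E0, Sum.elim src tgt α = v ∧ ∃ ε : k, ∀ g : E0 → k, Sum.elim g (-g) α * ε = g a := by
  rcases ha with ha | ha
  · exact ⟨.inl a, ha, 1, by simp⟩
  · exact ⟨.inr a, ha, -1, by simp⟩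

theorem eq_of_sum_smul_commutator_sub_mem_span {k : Type*} [Field k] {V E0 : Type*} [Fintype V]
    [DecidableEq V] [Fintype E0] {src tgt : E0 → V} (g : E0 → k) {w : PathAlg k V E0 src tgt}
    (hw : w ∈ lenGe k V E0 src tgt 3)
    (hJ : ∑ a, g a • (arrow k V E0 src tgt (.inl a) * arrow k V E0 src tgt (.inr a) -
        arrow k V E0 src tgt (.inr a) * arrow k V E0 src tgt (.inl a)) - w ∈
      Submodule.span k {z | ∃ p q, z = p * radd k V E0 src tgt * q})
    {v : V} {a b : E0} (ha : src a = v ∨ tgt a = v) (hb : src b = v ∨ tgt b = v) :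
    g a = g b := by
  classical
  obtain ⟨α, hα, εa, hεa⟩ := exists_doubled_arrow_of_incident (k := k) ha
  obtain ⟨β, hβ, εb, hεb⟩ := exists_doubled_arrow_of_incident (k := k) hb
  set ρ := diamondRep src tgt (hα.trans hβ.symm) εa (-εb)
  have hρradd : ρ (radd k V E0 src tgt) = 0 := by
    simpa [radd, hεa, hεb] using diamondRep_sum_smul_commutator (hα.trans hβ.symm) εa (-εb) 1
  have hρ := diamondRep_sum_smul_commutator (hα.trans hβ.symm) εa (-εb) g
  rw [← sub_add_cancel (∑ a, _) w, map_add, diamondRep_eq_zero_of_mem_lenGe_three _ _ _ hw,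
    ρ.map_eq_zero_of_mem_span_mul_mul hρradd hJ, add_zero, mul_neg, hεa, hεb] at hρ
  have hcorner := congr_fun (congr_fun hρ 0) 3
  simp only [Matrix.zero_apply, Matrix.single_apply_same] at hcorner
  linear_combination -hcorner

theorem triangular_quadratic_part_general (k : Type*) [Field k]
    (V E0 : Type*) [Fintype V] [DecidableEq V] [Fintype E0]
    (src tgt : E0 → V)
    (r : PathAlg k V E0 src tgt)
    (hr : r - radd k V E0 src tgt ∈ lenGe k V E0 src tgt 3)
    (A B : Type*) [Ring A] [Algebra k A] [Ring B] [Algebra k B]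
    (πA : PathAlg k V E0 src tgt →ₐ[k] A) (πB : PathAlg k V E0 src tgt →ₐ[k] B)
    (hJA : ∀ x, πA x = 0 ↔ x ∈ Submodule.span k
      {z : PathAlg k V E0 src tgt | ∃ p q, z = p * r * q})
    (hJB : ∀ x, πB x = 0 ↔ x ∈ Submodule.span k
      {z : PathAlg k V E0 src tgt | ∃ p q, z = p * radd k V E0 src tgt * q})
    (φ : A →ₐ[k] B)
    (c cstar : E0 → k)
    (hφa : ∀ a : E0,
      φ (πA (arrow k V E0 src tgt (Sum.inl a))) - c a • πB (arrow k V E0 src tgt (Sum.inl a)) ∈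
        Submodule.map πB.toLinearMap (lenGe k V E0 src tgt 2))
    (hφastar : ∀ a : E0,
      φ (πA (arrow k V E0 src tgt (Sum.inr a))) -
          cstar a • πB (arrow k V E0 src tgt (Sum.inr a)) ∈
        Submodule.map πB.toLinearMap (lenGe k V E0 src tgt 2)) :
    (φ (πA (radd k V E0 src tgt)) -
        πB (∑ a : E0, (c a * cstar a) •
          (arrow k V E0 src tgt (Sum.inl a) * arrow k V E0 src tgt (Sum.inr a) -
            arrow k V E0 src tgt (Sum.inr a) * arrow k V E0 src tgt (Sum.inl a))) ∈
      Submodule.map πB.toLinearMap (lenGe k V E0 src tgt 3)) ∧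
    (Function.Surjective φ →
      ∀ (v : V) (a b : E0),
        (src a = v ∨ tgt a = v) → (src b = v ∨ tgt b = v) →
        c a * cstar a = c b * cstar b) := by
  set ψ := φ.comp πA
  have harrow : ∀ δ, ψ (arrow k V E0 src tgt δ) - Sum.elim c cstar δ •
      πB.toLinearMap (arrow k V E0 src tgt δ) ∈ (lenGe k V E0 src tgt 2).map πB.toLinearMap := by
    rintro (a | a)
    exacts [hφa a, hφastar a]
  choose u hu hψu using fun δ => πB.toLinearMap.exists_sub_smul_mem_of_sub_smul_mem_map (harrow δ)
  have hψradd : ψ (radd k V E0 src tgt) =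
      πB (∑ a, (u (.inl a) * u (.inr a) - u (.inr a) * u (.inl a))) := by
    simp [radd, hψu]
  have quadratic_part := Submodule.mem_map_of_mem (f := πB.toLinearMap)
    (sum_commutator_sub_mem_lenGe_three _ u hu)
  simp only [AlgHom.toLinearMap_apply, map_sub, Sum.elim_inl, Sum.elim_inr, ← hψradd]
    at quadratic_part
  refine ⟨quadratic_part, fun _ v a b ha hb => ?_⟩
  have hradd : ψ (radd k V E0 src tgt) ∈ (lenGe k V E0 src tgt 3).map πB.toLinearMap := by
    have hr0 : ψ r = 0 := by
      simp [ψ, (hJA r).mpr (Submodule.subset_span ⟨1, 1, by simp⟩)]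
    have hu1 (δ : E0 ⊕ E0) : u δ ∈ lenGe k V E0 src tgt 1 := by
      simpa using add_mem (lenGe_antitone (by norm_num) (hu δ))
        (Submodule.smul_mem _ (Sum.elim c cstar δ) (arrow_mem_lenGe_one δ))
    simpa [hr0] using neg_mem (map_lenGe_le_map_lenGe ψ πB u hu1 hψu 3 ⟨_, hr, rfl⟩)
  obtain ⟨w, hw, hπw⟩ := sub_mem hradd quadratic_part
  rw [sub_sub_cancel, AlgHom.toLinearMap_apply] at hπw
  exact eq_of_sum_smul_commutator_sub_mem_span (fun a => c a * cstar a) hw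
    ((hJB _).mp (by rw [map_sub, hπw, sub_self])) ha hb

/-- Let `Q` be a quiver without loops with doubled quiver `Q̄`, and let `J = (r)` and
`J' = (r_add)` be the two-sided ideals of the path algebra `P = kQ̄` generated by `r`
and by the additive preprojective relation `r_add`, where `r - r_add` is a combination
of paths of length `≥ 3`.  Suppose `φ : P/J → P/J'` is a (well-defined) algebra map
fixing the vertex idempotents and sending each arrow `a` of `Q̄` to `c_a·a` plus paths
of length `≥ 2`.  Then the degree-2 part of `φ(r_add)` is
`∑_a c_a c_{a*}(a a* - a* a)` (i.e. their difference lies in paths of length `≥ 3`);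
hence if `φ` is surjective, all products `c_a·c_{a*}` for arrows `a` of `Q` incident to
a fixed vertex are equal. -/
theorem triangular_quadratic_part (k : Type*) [Field k]
    (V E0 : Type*) [Fintype V] [DecidableEq V] [Fintype E0]
    (src tgt : E0 → V)
    (hnoloop : ∀ e : E0, src e ≠ tgt e)
    (r : PathAlg k V E0 src tgt)
    (hr : r - radd k V E0 src tgt ∈ lenGe k V E0 src tgt 3)
    (A B : Type*) [Ring A] [Algebra k A] [Ring B] [Algebra k B]
    (πA : PathAlg k V E0 src tgt →ₐ[k] A) (πB : PathAlg k V E0 src tgt →ₐ[k] B)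
    (hπAsurj : Function.Surjective πA) (hπBsurj : Function.Surjective πB)
    (hJA : ∀ x, πA x = 0 ↔ x ∈ Submodule.span k
      {z : PathAlg k V E0 src tgt | ∃ p q, z = p * r * q})
    (hJB : ∀ x, πB x = 0 ↔ x ∈ Submodule.span k
      {z : PathAlg k V E0 src tgt | ∃ p q, z = p * radd k V E0 src tgt * q})
    (φ : A →ₐ[k] B)
    (hφe : ∀ i : V, φ (πA (vertex k V E0 src tgt i)) = πB (vertex k V E0 src tgt i))
    (c cstar : E0 → k)
    (hφa : ∀ a : E0,
      φ (πA (arrow k V E0 src tgt (Sum.inl a))) - c a • πB (arrow k V E0 src tgt (Sum.inl a)) ∈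
        Submodule.map πB.toLinearMap (lenGe k V E0 src tgt 2))
    (hφastar : ∀ a : E0,
      φ (πA (arrow k V E0 src tgt (Sum.inr a))) -
          cstar a • πB (arrow k V E0 src tgt (Sum.inr a)) ∈
        Submodule.map πB.toLinearMap (lenGe k V E0 src tgt 2)) :
    (φ (πA (radd k V E0 src tgt)) -
        πB (∑ a : E0, (c a * cstar a) •
          (arrow k V E0 src tgt (Sum.inl a) * arrow k V E0 src tgt (Sum.inr a) -
            arrow k V E0 src tgt (Sum.inr a) * arrow k V E0 src tgt (Sum.inl a))) ∈
      Submodule.map πB.toLinearMap (lenGe k V E0 src tgt 3)) ∧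
    (Function.Surjective φ →
      ∀ (v : V) (a b : E0),
        (src a = v ∨ tgt a = v) → (src b = v ∨ tgt b = v) →
        c a * cstar a = c b * cstar b) :=
  triangular_quadratic_part_general k V E0 src tgt r hr A B πA πB hJA hJB φ c cstar hφa hφastar
end
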